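/- arXiv:1706.08264 — 2 statements merged into one kernel-verified Lean document; each statement's English description precedes it below -/
import Mathlib

section
/- The union and the intersection of two maximum closures are maximum closures: if P and Q are both closed sets of maximum weight for v among all closed sets, then P ∪ Q and P ∩ Q are closed and also of maximum weight for v. Consequently there exists a unique inclusion-maximal maximum closure. -/
open scoped BigOperators

/-- A set of blocks is closed (under predecessors) if `(i,j) ∈ 𝒜` and `i ∈ P`
imply `j ∈ P`. -/
def ClosedSet {B : Type*} (A : B → B → Prop) (P : Finset B) : Prop :=
  ∀ i j : B, A i j → i ∈ P → j ∈ P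

/-- A maximum closure for the block values `v`: a closed set of maximum weight
among all closed sets. -/
def IsMaxClosure {B : Type*} [Fintype B] (A : B → B → Prop) (v : B → ℝ)
    (P : Finset B) : Prop :=
  ClosedSet A P ∧ ∀ Q : Finset B, ClosedSet A Q → ∑ i ∈ Q, v i ≤ ∑ i ∈ P, v i

lemma closed_union {B : Type*} [DecidableEq B] {A : B → B → Prop} {P Q : Finset B}
    (hP : ClosedSet A P) (hQ : ClosedSet A Q) : ClosedSet A (P ∪ Q) := by
  intro i j hij hi
  rcases Finset.mem_union.1 hi with h | h
  · exact Finset.mem_union_left _ (hP i j hij h)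
  · exact Finset.mem_union_right _ (hQ i j hij h)

lemma closed_inter {B : Type*} [DecidableEq B] {A : B → B → Prop} {P Q : Finset B}
    (hP : ClosedSet A P) (hQ : ClosedSet A Q) : ClosedSet A (P ∩ Q) := by
  intro i j hij hi
  exact Finset.mem_inter.2 ⟨hP i j hij (Finset.mem_inter.1 hi).1,
    hQ i j hij (Finset.mem_inter.1 hi).2⟩

lemma max_union {B : Type*} [Fintype B] [DecidableEq B]
    {A : B → B → Prop} {v : B → ℝ} {P Q : Finset B}
    (hP : IsMaxClosure A v P) (hQ : IsMaxClosure A v Q) :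
    IsMaxClosure A v (P ∪ Q) := by
  have hkey : ∑ i ∈ P ∪ Q, v i + ∑ i ∈ P ∩ Q, v i = ∑ i ∈ P, v i + ∑ i ∈ Q, v i :=
    Finset.sum_union_inter
  have hinter : ∑ i ∈ P ∩ Q, v i ≤ ∑ i ∈ P, v i :=
    hP.2 _ (closed_inter hP.1 hQ.1)
  refine ⟨closed_union hP.1 hQ.1, fun R hR => ?_⟩
  have := hQ.2 R hR
  linarith

lemma max_inter {B : Type*} [Fintype B] [DecidableEq B]
    {A : B → B → Prop} {v : B → ℝ} {P Q : Finset B}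
    (hP : IsMaxClosure A v P) (hQ : IsMaxClosure A v Q) :
    IsMaxClosure A v (P ∩ Q) := by
  have hkey : ∑ i ∈ P ∪ Q, v i + ∑ i ∈ P ∩ Q, v i = ∑ i ∈ P, v i + ∑ i ∈ Q, v i :=
    Finset.sum_union_inter
  have hunion : ∑ i ∈ P ∪ Q, v i ≤ ∑ i ∈ P, v i :=
    hP.2 _ (closed_union hP.1 hQ.1)
  refine ⟨closed_inter hP.1 hQ.1, fun R hR => ?_⟩
  have := hQ.2 R hR
  linarith

/-- the union and the intersection of two maximum closures are maximum
closures; consequently there exists a unique inclusion-maximal maximum closure. -/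
theorem max_closure_lattice {B : Type*} [Fintype B] [DecidableEq B]
    (A : B → B → Prop) (v : B → ℝ) (P Q : Finset B)
    (hP : IsMaxClosure A v P) (hQ : IsMaxClosure A v Q) :
    IsMaxClosure A v (P ∪ Q) ∧ IsMaxClosure A v (P ∩ Q) ∧
    ∃! R : Finset B, IsMaxClosure A v R ∧
      ∀ S : Finset B, IsMaxClosure A v S → S ⊆ R := by
  classical
  refine ⟨max_union hP hQ, max_inter hP hQ, ?_⟩
  set 𝒮 : Finset (Finset B) := Finset.univ.filter (fun S => IsMaxClosure A v S) with h𝒮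
  have hPmem : P ∈ 𝒮 := by simp [h𝒮, hP]
  have hne : 𝒮.Nonempty := ⟨P, hPmem⟩
  set R : Finset B := 𝒮.sup' hne id with hR
  have hRmax : IsMaxClosure A v R := by
    refine Finset.sup'_induction hne id (fun a ha b hb => ?_) (fun S hS => ?_)
    · exact max_union ha hb
    · exact (Finset.mem_filter.1 hS).2
  refine ⟨R, ⟨hRmax, fun S hS => ?_⟩, ?_⟩
  · exact Finset.le_sup' id (Finset.mem_filter.2 ⟨Finset.mem_univ _, hS⟩)
  · rintro R' ⟨hR'max, hR'big⟩
    refine le_antisymm ?_ (hR'big R hRmax)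
    have : R' ∈ 𝒮 := Finset.mem_filter.2 ⟨Finset.mem_univ _, hR'max⟩
    exact Finset.le_sup' id this
end

section
/- Lerchs–Grossman nesting property: reducing the block values makes the optimal pit shrink. Precisely, if v′ : ℬ → ℝ and v : ℬ → ℝ are two block value functions with v′(i) ≤ v(i) for all i ∈ ℬ, then the inclusion-maximal maximum closure for v′ is contained in the inclusion-maximal maximum closure for v; equivalently, for every maximum closure P′ for v′ there is a maximum closure P for v with P′ ⊆ P (namely P′ ∪ Q is a maximum closure for v whenever Q is). -/
open scoped BigOperators

lemma exists_max_closure {B : Type*} [Fintype B] [DecidableEq B]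
    (A : B → B → Prop) (v : B → ℝ) : ∃ P : Finset B, IsMaxClosure A v P := by
  classical
  obtain ⟨P, hPmem, hPmax⟩ := Finset.exists_max_image
    ((Finset.univ : Finset (Finset B)).filter (fun S => ClosedSet A S))
    (fun S => ∑ i ∈ S, v i)
    ⟨∅, Finset.mem_filter.2 ⟨Finset.mem_univ _,
      fun i j _ h => absurd h (Finset.notMem_empty i)⟩⟩
  refine ⟨P, (Finset.mem_filter.1 hPmem).2, fun Q hQ => ?_⟩
  exact hPmax Q (Finset.mem_filter.2 ⟨Finset.mem_univ _, hQ⟩)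

lemma union_max_closure {B : Type*} [Fintype B] [DecidableEq B]
    {A : B → B → Prop} {v v' : B → ℝ} (hle : ∀ i, v' i ≤ v i)
    {P' Q : Finset B} (hP' : IsMaxClosure A v' P') (hQ : IsMaxClosure A v Q) :
    IsMaxClosure A v (P' ∪ Q) := by
  have hdiff : (0 : ℝ) ≤ ∑ i ∈ P' \ Q, v' i := by
    have h1 : ∑ i ∈ P' ∩ Q, v' i ≤ ∑ i ∈ P', v' i :=
      hP'.2 _ (closed_inter hP'.1 hQ.1)
    have h2 : ∑ i ∈ P' ∩ Q, v' i + ∑ i ∈ P' \ Q, v' i = ∑ i ∈ P', v' i :=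
      Finset.sum_inter_add_sum_sdiff _ _ _
    linarith
  have hdiffv : (0 : ℝ) ≤ ∑ i ∈ P' \ Q, v i :=
    le_trans hdiff (Finset.sum_le_sum (fun i _ => hle i))
  have hsum : ∑ i ∈ P' ∪ Q, v i = ∑ i ∈ Q, v i + ∑ i ∈ P' \ Q, v i := by
    rw [← Finset.sum_union Finset.disjoint_sdiff,
      Finset.union_sdiff_self_eq_union, Finset.union_comm]
  refine ⟨closed_union hP'.1 hQ.1, fun S hS => ?_⟩
  have := hQ.2 S hS
  rw [hsum]; linarith

/-- Lerchs–Grossman nesting property: if `v′ ≤ v` pointwise, then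
the inclusion-maximal maximum closure for `v′` is contained in the inclusion-maximal
maximum closure for `v`; equivalently, every maximum closure `P′` for `v′` is
contained in some maximum closure for `v` — namely `P′ ∪ Q` is a maximum closure
for `v` whenever `Q` is. -/
theorem lerchs_grossman_nesting {B : Type*} [Fintype B] [DecidableEq B]
    (A : B → B → Prop) (v v' : B → ℝ) (hle : ∀ i, v' i ≤ v i) :
    (∀ R' R : Finset B,
      (IsMaxClosure A v' R' ∧ ∀ S : Finset B, IsMaxClosure A v' S → S ⊆ R') →
      (IsMaxClosure A v R ∧ ∀ S : Finset B, IsMaxClosure A v S → S ⊆ R) →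
      R' ⊆ R) ∧
    (∀ P' : Finset B, IsMaxClosure A v' P' →
      ∃ P : Finset B, IsMaxClosure A v P ∧ P' ⊆ P) ∧
    (∀ P' Q : Finset B, IsMaxClosure A v' P' → IsMaxClosure A v Q →
      IsMaxClosure A v (P' ∪ Q)) := by
  have key : ∀ P' Q : Finset B, IsMaxClosure A v' P' → IsMaxClosure A v Q →
      IsMaxClosure A v (P' ∪ Q) := fun P' Q h1 h2 => union_max_closure hle h1 h2
  refine ⟨?_, ?_, key⟩
  · rintro R' R ⟨hR', _⟩ ⟨hR, hRmax⟩
    have := hRmax (R' ∪ R) (key R' R hR' hR)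
    exact fun x hx => this (Finset.mem_union_left _ hx)
  · intro P' hP'
    obtain ⟨Q, hQ⟩ := exists_max_closure A v
    exact ⟨P' ∪ Q, key P' Q hP' hQ, Finset.subset_union_left⟩
end
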